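/- arXiv:2508.09044 — 3 statements merged into one kernel-verified Lean document; each statement's English description precedes it below -/
import Mathlib

section
/- Let k > l be natural numbers, ξ a complex number, and f : ℕ → ℝ≥0. Suppose there exist κ > 0 and N ∈ ℕ such that f(n) ≥ κ|ξ|β^{kl}_n for all n ≥ N. Then for every finitely supported sequence (c_n) of complex numbers, with ψ = ∑ c_n φ_n in ℓ²(ℕ), the inequality ‖ξ(a†)^k a^l ψ + ξ*(a†)^l a^k ψ‖ ≤ (2/κ)‖f(a†a)ψ‖ + 2|ξ|β^{kl}_{N-1}‖ψ‖ holds. -/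
/-! Both ladder terms are combinations of distinct basis vectors (the shifts `n ↦ n + k - l` and,
on the indices where `β^{lk}_n ≠ 0`, `n ↦ n - k + l` are injective) whose coefficients are
bounded by `|c_n| |ξ| β^{kl}_n`, using `β^{lk}_n ≤ β^{kl}_n`. So each has norm at most that of
the diagonal vector `∑ c_n |ξ| β^{kl}_n φ_n`. By monotonicity of `β^{kl}` and the growth
hypothesis, `|ξ| β^{kl}_n ≤ f(n)/κ + |ξ| β^{kl}_{N-1}` for every `n`, and a diagonal weight
dominated by `r a + M` gives a vector of norm at most `r ‖∑ c_n a_n φ_n‖ + M ‖∑ c_n φ_n‖`. -/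

open scoped ENNReal

/-- Pochhammer symbol `(x,s) = x(x+1)⋯(x+s-1)` for an integer starting value. -/
def poch (x : ℤ) (s : ℕ) : ℤ := ∏ i ∈ Finset.range s, (x + i)

/-- `β^{kl}_n = sqrt((n-l+1,l)·(n-l+1,k))`; `betaKL l k n` is `β^{lk}_n`. -/
noncomputable def betaKL (k l n : ℕ) : ℝ :=
  Real.sqrt (((poch ((n : ℤ) - l + 1) l * poch ((n : ℤ) - l + 1) k : ℤ) : ℝ))

instance : Fact (1 ≤ (2 : ℝ≥0∞)) := ⟨by norm_num⟩

/-- The standard basis vector `φ_n` of `ℓ²(ℕ)`. -/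
noncomputable def φ (n : ℕ) : lp (fun _ : ℕ => ℂ) 2 := lp.single 2 n 1

section Pochhammer

variable {x y : ℤ}

lemma poch_eq_zero {s : ℕ} (hx : x ≤ 0) (hxs : -x < s) : poch x s = 0 :=
  Finset.prod_eq_zero (i := (-x).toNat) (by rw [Finset.mem_range]; omega) (by omega)

lemma poch_pos (hx : 0 < x) (s : ℕ) : 0 < poch x s :=
  Finset.prod_pos fun i _ => by omega

lemma poch_le_poch (hx : 0 < x) (hxy : x ≤ y) (s : ℕ) : poch x s ≤ poch y s :=
  Finset.prod_le_prod (fun i _ => by omega) (fun i _ => by omega)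

lemma poch_mul_poch_le (hx : 0 < x) (hxy : x ≤ y) (a b : ℕ) :
    poch x a * poch x b ≤ poch y a * poch y b :=
  mul_le_mul (poch_le_poch hx hxy a) (poch_le_poch hx hxy b) (poch_pos hx b).le
    (poch_pos (hx.trans_le hxy) a).le

end Pochhammer

lemma betaKL_nonneg (k l n : ℕ) : 0 ≤ betaKL k l n := Real.sqrt_nonneg _

lemma betaKL_eq_zero_of_lt (k : ℕ) {l n : ℕ} (h : n < l) : betaKL k l n = 0 := by
  rw [betaKL, poch_eq_zero (by omega) (by omega), zero_mul, Int.cast_zero, Real.sqrt_zero]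

lemma betaKL_mono (k l : ℕ) : Monotone (betaKL k l) := by
  intro n m hnm
  rcases lt_or_ge n l with hn | hn
  · rw [betaKL_eq_zero_of_lt k hn]
    exact betaKL_nonneg k l m
  · exact Real.sqrt_le_sqrt <| by
      exact_mod_cast poch_mul_poch_le (x := n - l + 1) (y := m - l + 1) (by omega) (by omega) l k

lemma betaKL_swap_le {k l : ℕ} (hlk : l ≤ k) (n : ℕ) : betaKL l k n ≤ betaKL k l n := by
  rcases lt_or_ge n k with hn | hn
  · rw [betaKL_eq_zero_of_lt l hn]
    exact betaKL_nonneg k l n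
  · refine Real.sqrt_le_sqrt ?_
    rw [mul_comm (poch _ k)]
    exact_mod_cast poch_mul_poch_le (x := n - k + 1) (y := n - l + 1) (by omega) (by omega) l k

section Orthonormal

variable {𝕜 E ι ι' : Type*} [RCLike 𝕜] [NormedAddCommGroup E] [InnerProductSpace 𝕜 E]
  {v : ι → E}

theorem Orthonormal.norm_sum_smul_sq (hv : Orthonormal 𝕜 v) (a : ι → 𝕜) (s : Finset ι) :
    ‖∑ i ∈ s, a i • v i‖ ^ 2 = ∑ i ∈ s, ‖a i‖ ^ 2 := by
  rw [@norm_sq_eq_re_inner 𝕜, hv.inner_sum, map_sum]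
  refine Finset.sum_congr rfl fun i _ => ?_
  rw [RCLike.conj_mul, ← RCLike.ofReal_pow, RCLike.ofReal_re]

theorem Orthonormal.norm_sum_smul_comp_sq (hv : Orthonormal 𝕜 v) {w : ι' → ι} {s : Finset ι'}
    (hw : Set.InjOn w s) (a : ι' → 𝕜) :
    ‖∑ i ∈ s, a i • v (w i)‖ ^ 2 = ∑ i ∈ s, ‖a i‖ ^ 2 := by
  rw [← Finset.sum_attach s, ← Finset.sum_attach s]
  exact (hv.comp _ hw.injective).norm_sum_smul_sq (fun i => a i) s.attach

theorem Orthonormal.norm_sum_smul_comp_le (hv : Orthonormal 𝕜 v) {t s : Finset ι'}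
    (hts : t ⊆ s) {w u : ι' → ι} (hw : Set.InjOn w t) (hu : Set.InjOn u s) {a b : ι' → 𝕜}
    (hab : ∀ i ∈ t, ‖a i‖ ≤ ‖b i‖) :
    ‖∑ i ∈ t, a i • v (w i)‖ ≤ ‖∑ i ∈ s, b i • v (u i)‖ := by
  rw [← pow_le_pow_iff_left₀ (norm_nonneg _) (norm_nonneg _) two_ne_zero,
    hv.norm_sum_smul_comp_sq hw, hv.norm_sum_smul_comp_sq hu]
  calc ∑ i ∈ t, ‖a i‖ ^ 2 ≤ ∑ i ∈ t, ‖b i‖ ^ 2 :=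
        Finset.sum_le_sum fun i hi => pow_le_pow_left₀ (norm_nonneg _) (hab i hi) 2
    _ ≤ ∑ i ∈ s, ‖b i‖ ^ 2 := Finset.sum_le_sum_of_subset_of_nonneg hts fun _ _ _ => by positivity

theorem Orthonormal.norm_sum_weight_le (hv : Orthonormal 𝕜 v) (c : ι → 𝕜) (s : Finset ι)
    {g a : ι → ℝ} {r M : ℝ} (hr : 0 ≤ r) (hM : 0 ≤ M) (hg : ∀ i ∈ s, 0 ≤ g i)
    (hga : ∀ i ∈ s, g i ≤ r * a i + M) :
    ‖∑ i ∈ s, (c i * g i) • v i‖ ≤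
      r * ‖∑ i ∈ s, (c i * a i) • v i‖ + M * ‖∑ i ∈ s, c i • v i‖ := by
  calc ‖∑ i ∈ s, (c i * g i) • v i‖ ≤ ‖∑ i ∈ s, (c i * (r * a i + M : ℝ)) • v i‖ := by
        refine hv.norm_sum_smul_comp_le subset_rfl (Set.injOn_id _) (Set.injOn_id _)
          fun i hi => ?_
        rw [norm_mul, norm_mul, RCLike.norm_ofReal, RCLike.norm_ofReal, abs_of_nonneg (hg i hi)]
        gcongr
        exact (hga i hi).trans (le_abs_self _)
    _ = ‖(r : 𝕜) • ∑ i ∈ s, (c i * a i) • v i + (M : 𝕜) • ∑ i ∈ s, c i • v i‖ := by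
        rw [Finset.smul_sum, Finset.smul_sum, ← Finset.sum_add_distrib]
        refine congrArg _ (Finset.sum_congr rfl fun i _ => ?_)
        rw [smul_smul, smul_smul, ← add_smul]
        push_cast
        congr 1
        ring
    _ ≤ r * ‖∑ i ∈ s, (c i * a i) • v i‖ + M * ‖∑ i ∈ s, c i • v i‖ := by
        refine (norm_add_le _ _).trans_eq ?_
        rw [norm_smul, norm_smul, RCLike.norm_ofReal, RCLike.norm_ofReal, abs_of_nonneg hr,
          abs_of_nonneg hM]

end Orthonormal

lemma orthonormal_φ : Orthonormal ℂ φ := by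
  convert (default : HilbertBasis ℕ ℂ (lp (fun _ : ℕ => ℂ) 2)).orthonormal
  ext n : 1
  rw [← HilbertBasis.repr_symm_single]
  rfl

lemma norm_mul_ofReal_of_nonneg (z : ℂ) {r : ℝ} (hr : 0 ≤ r) : ‖z * (r : ℂ)‖ = ‖z‖ * r := by
  rw [norm_mul, Complex.norm_real, Real.norm_of_nonneg hr]

section Ladder

variable {k l : ℕ} (ξ : ℂ) (c : ℕ → ℂ) (s : Finset ℕ)

lemma norm_sum_raising_le (hlk : l ≤ k) :
    ‖∑ n ∈ s, (c n * ξ * betaKL k l n) • φ (n + k - l)‖ ≤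
      ‖∑ n ∈ s, (c n * (‖ξ‖ * betaKL k l n : ℝ)) • φ n‖ :=
  orthonormal_φ.norm_sum_smul_comp_le subset_rfl (fun n _ m _ h => by omega) (Set.injOn_id _)
    fun n _ => by
      rw [norm_mul_ofReal_of_nonneg _ (betaKL_nonneg k l n),
        norm_mul_ofReal_of_nonneg _ (mul_nonneg (norm_nonneg ξ) (betaKL_nonneg k l n)), norm_mul,
        mul_assoc]

lemma norm_sum_lowering_le (hlk : l ≤ k) :
    ‖∑ n ∈ s, (c n * starRingEnd ℂ ξ * betaKL l k n) • φ (n - k + l)‖ ≤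
      ‖∑ n ∈ s, (c n * (‖ξ‖ * betaKL k l n : ℝ)) • φ n‖ := by
  rw [← Finset.sum_filter_of_ne (p := (k ≤ ·)) fun n _ hne => ?_]
  · refine orthonormal_φ.norm_sum_smul_comp_le (Finset.filter_subset _ _)
      (fun n hn m hm h => ?_) (Set.injOn_id _) fun n _ => ?_
    · rw [Finset.mem_coe, Finset.mem_filter] at hn hm
      omega
    · rw [norm_mul_ofReal_of_nonneg _ (betaKL_nonneg l k n),
        norm_mul_ofReal_of_nonneg _ (mul_nonneg (norm_nonneg ξ) (betaKL_nonneg k l n)), norm_mul,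
        RCLike.norm_conj, mul_assoc]
      gcongr
      exact betaKL_swap_le hlk n
  · by_contra hlt
    rw [betaKL_eq_zero_of_lt l (not_le.mp hlt)] at hne
    simp at hne

end Ladder

lemma norm_mul_betaKL_le_inv_mul_add {k l N : ℕ} {ξ : ℂ} {f : ℕ → ℝ} (hf0 : ∀ n, 0 ≤ f n)
    {κ : ℝ} (hκ : 0 < κ) (hfN : ∀ n, N ≤ n → κ * ‖ξ‖ * betaKL k l n ≤ f n) (n : ℕ) :
    ‖ξ‖ * betaKL k l n ≤ κ⁻¹ * f n + ‖ξ‖ * betaKL k l (N - 1) := by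
  rcases le_or_gt N n with hn | hn
  · have : ‖ξ‖ * betaKL k l n ≤ κ⁻¹ * f n := by
      rw [← div_eq_inv_mul, le_div_iff₀ hκ]
      linarith [hfN n hn]
    linarith [mul_nonneg (norm_nonneg ξ) (betaKL_nonneg k l (N - 1))]
  · have : 0 ≤ κ⁻¹ * f n := mul_nonneg (inv_nonneg.2 hκ.le) (hf0 n)
    have : betaKL k l n ≤ betaKL k l (N - 1) := betaKL_mono k l (by omega)
    nlinarith [norm_nonneg ξ]

theorem stmt6 (k l N : ℕ) (hlk : l < k) (ξ : ℂ) (f : ℕ → ℝ)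
    (hf0 : ∀ n, 0 ≤ f n) (κ : ℝ) (hκ : 0 < κ)
    (hfN : ∀ n, N ≤ n → κ * ‖ξ‖ * betaKL k l n ≤ f n)
    (c : ℕ →₀ ℂ) :
    ‖(∑ n ∈ c.support, (c n * ξ * betaKL k l n) • φ (n + k - l)) +
        (∑ n ∈ c.support, (c n * (starRingEnd ℂ ξ) * betaKL l k n) • φ (n - k + l))‖ ≤
      (2 / κ) * ‖∑ n ∈ c.support, (c n * f n) • φ n‖ +
        2 * ‖ξ‖ * betaKL k l (N - 1) * ‖∑ n ∈ c.support, (c n) • φ n‖ := by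
  have h_diag : ‖∑ n ∈ c.support, (c n * (‖ξ‖ * betaKL k l n : ℝ)) • φ n‖ ≤
      κ⁻¹ * ‖∑ n ∈ c.support, (c n * f n) • φ n‖ +
        ‖ξ‖ * betaKL k l (N - 1) * ‖∑ n ∈ c.support, c n • φ n‖ :=
    orthonormal_φ.norm_sum_weight_le c c.support (inv_nonneg.2 hκ.le)
      (mul_nonneg (norm_nonneg ξ) (betaKL_nonneg k l (N - 1)))
      (fun n _ => mul_nonneg (norm_nonneg ξ) (betaKL_nonneg k l n))
      (fun n _ => norm_mul_betaKL_le_inv_mul_add hf0 hκ hfN n)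
  have h_ladder := add_le_add (norm_sum_raising_le ξ c c.support hlk.le)
    (norm_sum_lowering_le ξ c c.support hlk.le)
  refine (norm_add_le _ _).trans ?_
  rw [div_eq_mul_inv]
  linarith
end

section
/- Let k > l with Δ = k − l ≥ 1, fix n₀ with l ≤ n₀ < k, and set γ_r = β^{lk}_{n₀+rΔ}. Then 1/γ_{r+2} ~ (Δr)^{−(k+l)/2} as r → ∞; that is, lim_{r→∞} γ_{r+2}·(Δr)^{−(k+l)/2} = 1. -/
/-- With `γ_r = β^{lk}_{n₀+rΔ}`: `1/γ_{r+2} ~ (Δr)^{−(k+l)/2}`, i.e.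
`γ_{r+2}·(Δr)^{−(k+l)/2} → 1` as `r → ∞`. -/
theorem stmt10 (k l n₀ : ℕ) (hlk : l < k) (hn₀l : l ≤ n₀) (hn₀k : n₀ < k) :
    Filter.Tendsto (fun r : ℕ =>
      betaKL l k (n₀ + (r + 2) * (k - l)) * (((k - l : ℕ) : ℝ) * r) ^ (-(((k : ℝ) + l) / 2)))
      Filter.atTop (nhds 1) := by
  have hΔ : 0 < k - l := by omega
  have hΔR : (0:ℝ) < ((k-l:ℕ):ℝ) := by exact_mod_cast hΔ
  have hx : Filter.Tendsto (fun r : ℕ => ((k-l:ℕ):ℝ)*r) Filter.atTop Filter.atTop :=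
    Filter.Tendsto.const_mul_atTop hΔR tendsto_natCast_atTop_atTop
  -- each rescaled factor tends to 1
  have hone : ∀ i : ℕ, Filter.Tendsto
      (fun r : ℕ => (((n₀:ℝ) + (r+2)*((k-l:ℕ):ℝ)) - k + 1 + i) / (((k-l:ℕ):ℝ)*r))
      Filter.atTop (nhds 1) := by
    intro i
    have h0 : Filter.Tendsto
        (fun r : ℕ => ((n₀:ℝ) + 2*((k-l:ℕ):ℝ) - k + 1 + i) / (((k-l:ℕ):ℝ)*r))
        Filter.atTop (nhds 0) := tendsto_const_nhds.div_atTop hx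
    have h1 := h0.const_add 1
    rw [add_zero] at h1
    apply h1.congr'
    filter_upwards [Filter.eventually_ge_atTop 1] with r hr
    have hrR : (0:ℝ) < (r:ℝ) := by exact_mod_cast hr
    have hxr : ((k-l:ℕ):ℝ)*r ≠ 0 := ne_of_gt (mul_pos hΔR hrR)
    field_simp
    ring
  -- product of factors tends to 1
  have key : Filter.Tendsto (fun r : ℕ =>
      (∏ i ∈ Finset.range k, ((((n₀:ℝ) + (r+2)*((k-l:ℕ):ℝ)) - k + 1 + i) / (((k-l:ℕ):ℝ)*r))) *
      (∏ i ∈ Finset.range l, ((((n₀:ℝ) + (r+2)*((k-l:ℕ):ℝ)) - k + 1 + i) / (((k-l:ℕ):ℝ)*r))))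
      Filter.atTop (nhds 1) := by
    have hk : Filter.Tendsto (fun r : ℕ =>
        ∏ i ∈ Finset.range k, ((((n₀:ℝ) + (r+2)*((k-l:ℕ):ℝ)) - k + 1 + i) / (((k-l:ℕ):ℝ)*r)))
        Filter.atTop (nhds (∏ _i ∈ Finset.range k, (1:ℝ))) :=
      tendsto_finset_prod _ (fun i _ => hone i)
    have hl : Filter.Tendsto (fun r : ℕ =>
        ∏ i ∈ Finset.range l, ((((n₀:ℝ) + (r+2)*((k-l:ℕ):ℝ)) - k + 1 + i) / (((k-l:ℕ):ℝ)*r)))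
        Filter.atTop (nhds (∏ _i ∈ Finset.range l, (1:ℝ))) :=
      tendsto_finset_prod _ (fun i _ => hone i)
    have := hk.mul hl
    simpa using this
  have key2 := (Real.continuous_sqrt.tendsto 1).comp key
  rw [Real.sqrt_one] at key2
  apply key2.congr'
  filter_upwards [Filter.eventually_ge_atTop 1] with r hr
  have hrR : (0:ℝ) < (r:ℝ) := by exact_mod_cast hr
  set x : ℝ := ((k-l:ℕ):ℝ)*r with hxdef
  have hxpos : 0 < x := mul_pos hΔR hrR
  set n : ℕ := n₀ + (r+2)*(k-l) with hndef
  have hkn : k ≤ n := by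
    have h2 : 2*(k-l) ≤ (r+2)*(k-l) := Nat.mul_le_mul_right _ (by omega)
    omega
  have hknR : (k:ℝ) ≤ (n:ℝ) := by exact_mod_cast hkn
  have hfac : ∀ i : ℕ, (0:ℝ) < (n:ℝ) - k + 1 + i := by
    intro i
    have : (0:ℝ) ≤ (i:ℝ) := Nat.cast_nonneg i
    linarith
  have hPk : (0:ℝ) < ∏ i ∈ Finset.range k, ((n:ℝ) - k + 1 + i) :=
    Finset.prod_pos fun i _ => hfac i
  have hPl : (0:ℝ) < ∏ i ∈ Finset.range l, ((n:ℝ) - k + 1 + i) :=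
    Finset.prod_pos fun i _ => hfac i
  have hbeta : betaKL l k n =
      Real.sqrt ((∏ i ∈ Finset.range k, ((n:ℝ) - k + 1 + i)) *
        (∏ i ∈ Finset.range l, ((n:ℝ) - k + 1 + i))) := by
    unfold betaKL poch
    push_cast
    ring_nf
  -- rewrite the rpow as a sqrt
  have hrpow : x ^ (-(((k:ℝ) + l) / 2)) = Real.sqrt (x ^ (-((k:ℝ) + l))) := by
    rw [Real.sqrt_eq_rpow, ← Real.rpow_mul hxpos.le]
    congr 1
    ring
  have hXval : x ^ (-((k:ℝ) + l)) = (x ^ (k+l : ℕ))⁻¹ := by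
    rw [show ((k:ℝ) + l) = ((k+l : ℕ) : ℝ) by push_cast; ring,
      Real.rpow_neg hxpos.le, Real.rpow_natCast]
  have hnum : ∀ i : ℕ, (((n₀:ℝ) + (r+2)*((k-l:ℕ):ℝ)) - k + 1 + i) / x
      = ((n:ℝ) - k + 1 + i) / x := by
    intro i
    congr 1
    rw [hndef]
    push_cast
    ring
  have ek : (∏ i ∈ Finset.range k, ((((n₀:ℝ) + (r+2)*((k-l:ℕ):ℝ)) - k + 1 + i) / x))
      = (∏ i ∈ Finset.range k, ((n:ℝ) - k + 1 + i)) / x ^ k := by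
    rw [Finset.prod_congr rfl (fun i _ => hnum i), Finset.prod_div_distrib,
      Finset.prod_const, Finset.card_range]
  have el : (∏ i ∈ Finset.range l, ((((n₀:ℝ) + (r+2)*((k-l:ℕ):ℝ)) - k + 1 + i) / x))
      = (∏ i ∈ Finset.range l, ((n:ℝ) - k + 1 + i)) / x ^ l := by
    rw [Finset.prod_congr rfl (fun i _ => hnum i), Finset.prod_div_distrib,
      Finset.prod_const, Finset.card_range]
  simp only [Function.comp_apply]
  rw [hbeta, hrpow, hXval, ← Real.sqrt_mul (le_of_lt (mul_pos hPk hPl)), ek, el]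
  congr 1
  rw [pow_add]
  have hxne : x ≠ 0 := ne_of_gt hxpos
  field_simp
end

section
/- Let k > l be natural numbers with Δ = k − l, θ ∈ ℝ, f : ℕ → ℝ. Fix n₀ with l ≤ n₀ < k, and let (c̃_r)_{r∈ℕ} be a complex sequence satisfying e^{−iθ}β^{kl}_{n₀+rΔ}c̃_{r+1} + e^{iθ}β^{lk}_{n₀+rΔ}c̃_{r−1} + (f(n₀+rΔ) ∓ i)c̃_r = 0 for all r (with c̃_{−1} := 0). Define c_n = c̃_r if n = n₀ + rΔ for some r ∈ ℕ, and c_n = 0 otherwise. Then (c_n)_{n∈ℕ} satisfies e^{−iθ}β^{kl}_n c_{n+Δ} + e^{iθ}β^{lk}_n c_{n−Δ} + (f(n) ∓ i)c_n = 0 for all n ∈ ℕ (with c-terms of negative index zero). Moreover, sequences built from distinct values of n₀ ∈ {l, …, k−1} are linearly independent. -/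
open Complex

lemma poch_zero (n l : ℕ) (h : n < l) : poch ((n:ℤ) - l + 1) l = 0 := by
  apply Finset.prod_eq_zero (i := l - 1 - n)
  · simp only [Finset.mem_range]; omega
  · omega

lemma betaKL_zero (k l n : ℕ) (h : n < l) : betaKL k l n = 0 := by
  unfold betaKL
  rw [poch_zero n l h, zero_mul]
  simp

lemma prog_eq (l k m m' r r' : ℕ) (h : l < k) (h1 : l ≤ m) (h2 : m < k)
    (h3 : l ≤ m') (h4 : m' < k) (heq : m + r*(k-l) = m' + r'*(k-l)) : m = m' := by
  have e1 : m - l + r*(k-l) = m' - l + r'*(k-l) := by omega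
  have e2 : (m - l + r*(k-l)) % (k-l) = m - l := by
    rw [Nat.add_mul_mod_self_right, Nat.mod_eq_of_lt (by omega)]
  have e3 : (m' - l + r'*(k-l)) % (k-l) = m' - l := by
    rw [Nat.add_mul_mod_self_right, Nat.mod_eq_of_lt (by omega)]
  rw [e1] at e2; omega

theorem stmt15 (k l n₀ : ℕ) (hlk : l < k) (hn₀l : l ≤ n₀) (hn₀k : n₀ < k)
    (θ : ℝ) (f : ℕ → ℝ) (ε : ℂ) (hε : ε = I ∨ ε = -I)
    (ctil : ℕ → ℂ)
    -- the second-order recurrence for `c̃`, with `c̃₋₁ := 0`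
    (h0 : Complex.exp (-(θ * I)) * betaKL k l n₀ * ctil 1 +
          ((f n₀ : ℂ) - ε) * ctil 0 = 0)
    (hrec : ∀ r : ℕ, 1 ≤ r →
      Complex.exp (-(θ * I)) * betaKL k l (n₀ + r * (k - l)) * ctil (r + 1) +
      Complex.exp (θ * I) * betaKL l k (n₀ + r * (k - l)) * ctil (r - 1) +
      ((f (n₀ + r * (k - l)) : ℂ) - ε) * ctil r = 0)
    (c : ℕ → ℂ)
    (hc1 : ∀ r : ℕ, c (n₀ + r * (k - l)) = ctil r)
    (hc2 : ∀ n : ℕ, (∀ r : ℕ, n ≠ n₀ + r * (k - l)) → c n = 0) :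
    (∀ n : ℕ,
      Complex.exp (-(θ * I)) * betaKL k l n * c (n + (k - l)) +
      Complex.exp (θ * I) * betaKL l k n * c (n - (k - l)) +
      ((f n : ℂ) - ε) * c n = 0) ∧
    -- sequences built from distinct values of `n₀ ∈ {l, …, k−1}` are linearly independent
    (∀ g : ℕ → ℕ → ℂ,
      (∀ m : ℕ, l ≤ m → m < k →
        (∀ n : ℕ, (∀ r : ℕ, n ≠ m + r * (k - l)) → g m n = 0) ∧ g m ≠ 0) →
      LinearIndependent ℂ (fun m : {m : ℕ // m ∈ Finset.Ico l k} => g m.1)) := by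
  constructor
  · intro n
    by_cases hex : ∃ r, n = n₀ + r * (k - l)
    · obtain ⟨r, rfl⟩ := hex
      cases r with
      | zero =>
        simp only [Nat.zero_mul, Nat.add_zero]
        have hcn : c n₀ = ctil 0 := by have := hc1 0; simpa using this
        have hcn1 : c (n₀ + (k - l)) = ctil 1 := by
          have := hc1 1; rwa [one_mul] at this
        rw [betaKL_zero l k n₀ hn₀k, hcn, hcn1]
        push_cast
        linear_combination h0
      | succ r =>
        have h1 := hrec (r + 1) (by omega)
        have e0 : (r+1) * (k-l) = r * (k-l) + (k-l) := by ring
        have e1 : n₀ + (r+1) * (k-l) + (k-l) = n₀ + (r+2) * (k-l) := by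
          have : (r+2) * (k-l) = (r+1) * (k-l) + (k-l) := by ring
          omega
        have e2 : n₀ + (r+1) * (k-l) - (k-l) = n₀ + r * (k-l) := by omega
        rw [e1, e2, hc1 (r+2), hc1 r, hc1 (r+1)]
        simpa using h1
    · push_neg at hex
      have t3 : c n = 0 := hc2 n hex
      have t1 : betaKL k l n * c (n + (k - l)) = 0 := by
        rcases lt_or_ge n l with h | h
        · rw [betaKL_zero k l n h]; simp
        · rw [hc2 (n + (k - l)) ?_, mul_zero]
          intro r hr
          cases r with
          | zero => simp only [Nat.zero_mul, Nat.add_zero] at hr; omega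
          | succ r =>
            refine hex r ?_
            have : (r+1) * (k-l) = r * (k-l) + (k-l) := by ring
            omega
      have t2 : betaKL l k n * c (n - (k - l)) = 0 := by
        rcases lt_or_ge n k with h | h
        · rw [betaKL_zero l k n h]; simp
        · rw [hc2 (n - (k - l)) ?_, mul_zero]
          intro r hr
          refine hex (r + 1) ?_
          have : (r+1) * (k-l) = r * (k-l) + (k-l) := by ring
          omega
      rw [t3, mul_zero, mul_assoc, mul_assoc, t1, t2, mul_zero, mul_zero]
      ring
  · intro g hg
    rw [linearIndependent_iff']
    intro s fc hsum i hi
    obtain ⟨m, hm⟩ := i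
    rw [Finset.mem_Ico] at hm
    obtain ⟨hvan, hne⟩ := hg m hm.1 hm.2
    obtain ⟨n, hn⟩ : ∃ n, g m n ≠ 0 := by
      by_contra h; push_neg at h; exact hne (funext h)
    obtain ⟨r, hr⟩ : ∃ r, n = m + r * (k - l) := by
      by_contra h; push_neg at h; exact hn (hvan n h)
    have h := congrFun hsum n
    simp only [Finset.sum_apply, Pi.smul_apply, smul_eq_mul, Pi.zero_apply] at h
    rw [Finset.sum_eq_single (⟨m, Finset.mem_Ico.mpr hm⟩ :
        {m : ℕ // m ∈ Finset.Ico l k})] at h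
    · exact (mul_eq_zero.mp h).resolve_right hn
    · rintro ⟨m', hm'⟩ hjs hjne
      rw [Finset.mem_Ico] at hm'
      have : g m' n = 0 := by
        apply (hg m' hm'.1 hm'.2).1
        intro r' hr'
        exact hjne (Subtype.ext (prog_eq l k m' m r' r hlk hm'.1 hm'.2 hm.1 hm.2
          (by omega)))
      simp [this]
    · intro habs; exact absurd hi habs
end
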